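/- (Dual Tsirelson bound for qubits.) Let M₁ be an effect on ℂ² ⊗ ℂ² with tr M₁ ≤ 1, and set M = 2M₁ − 𝟙. Then for all qubit states ρ₀^A, ρ₁^A, ρ₀^B, ρ₁^B, the quantity D = E(ρ₀^A, ρ₀^B, M) + E(ρ₀^A, ρ₁^B, M) + E(ρ₁^A, ρ₀^B, M) − E(ρ₁^A, ρ₁^B, M) satisfies |D| ≤ 2√2. -/

import Mathlib

open Matrix Kronecker ComplexOrder

/-- A quantum state: positive semidefinite matrix of trace one. -/
def IsState {d : ℕ} (ρ : Matrix (Fin d) (Fin d) ℂ) : Prop :=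
  ρ.PosSemidef ∧ ρ.trace = 1

/-- The difference from ignorance for a two-qubit system (`α₂ α₂ / 2 = 2`). -/
noncomputable def Ediff2
    (ρA ρB : Matrix (Fin 2) (Fin 2) ℂ)
    (M : Matrix (Fin 2 × Fin 2) (Fin 2 × Fin 2) ℂ) : ℝ :=
  2 * ((((ρA - (2 : ℂ)⁻¹ • 1) ⊗ₖ (ρB - (2 : ℂ)⁻¹ • 1)) * M).trace).re

/-!
Write `aᵢ = ρᵢᴬ - 𝟙/2` and `bⱼ = ρⱼᴮ - 𝟙/2`. As `tr aᵢ = 0`, the identity part of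
`M = 2M₁ - 𝟙` drops out and `D = 4 Re tr (X M₁)` with `X = a₀ ⊗ (b₀ + b₁) + a₁ ⊗ (b₀ - b₁)`.
A traceless Hermitian `2 × 2` matrix `b` satisfies `b² = -det b • 𝟙`, hence
`-√(-det b) ≤ b ≤ √(-det b)` in the Loewner order. This gives `-½ ≤ aᵢ ≤ ½`, using
`det aᵢ = det ρᵢᴬ - ¼ ≥ -¼`. Since `det` is a quadratic form on `2 × 2` matrices, the parallelogram
law gives `γ² + δ² = -2 det b₀ - 2 det b₁ ≤ 1` for `γ = √(-det (b₀ + b₁))`, `δ = √(-det (b₀ - b₁))`,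
so `γ + δ ≤ √2`. Loewner bounds multiply under `⊗` and add under `+`, so
`-(γ + δ)/2 ≤ X ≤ (γ + δ)/2`; pairing with `M₁ ≥ 0` gives `|D| ≤ 2 (γ + δ) tr M₁ ≤ 2√2`.
-/

namespace Matrix

section Kronecker

variable {l m n p α : Type*} [Ring α]

theorem sub_kronecker (A₁ A₂ : Matrix l m α) (B : Matrix n p α) :
    (A₁ - A₂) ⊗ₖ B = A₁ ⊗ₖ B - A₂ ⊗ₖ B := by
  ext; simp [sub_mul]

theorem kronecker_sub (A : Matrix l m α) (B₁ B₂ : Matrix n p α) :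
    A ⊗ₖ (B₁ - B₂) = A ⊗ₖ B₁ - A ⊗ₖ B₂ := by
  ext; simp [mul_sub]

end Kronecker

variable {𝕜 n m : Type*} [RCLike 𝕜] [DecidableEq n]

open scoped MatrixOrder in
theorem PosSemidef.re_trace_mul_nonneg [Fintype n] {A B : Matrix n n 𝕜} (hA : A.PosSemidef)
    (hB : B.PosSemidef) : 0 ≤ RCLike.re (A * B).trace := by
  obtain ⟨C, rfl⟩ := CStarAlgebra.nonneg_iff_eq_star_mul_self.mp hB.nonneg
  rw [← mul_assoc, trace_mul_comm, ← mul_assoc, star_eq_conjTranspose]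
  exact (RCLike.nonneg_iff.mp (hA.mul_mul_conjTranspose_same C).trace_nonneg).1

/-- Equivalently, `X` is Hermitian of operator norm at most `s`. -/
def LoewnerBounded (s : ℝ) (X : Matrix n n 𝕜) : Prop :=
  (s • 1 - X).PosSemidef ∧ (s • 1 + X).PosSemidef

namespace LoewnerBounded

theorem mono {s t : ℝ} {X : Matrix n n 𝕜} (hX : LoewnerBounded s X) (hst : s ≤ t) :
    LoewnerBounded t X := by
  have h : ((t - s) • 1 : Matrix n n 𝕜).PosSemidef := PosSemidef.one.smul (sub_nonneg.2 hst)
  constructor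
  · convert h.add hX.1 using 1; module
  · convert h.add hX.2 using 1; module

theorem add {s t : ℝ} {X Y : Matrix n n 𝕜} (hX : LoewnerBounded s X)
    (hY : LoewnerBounded t Y) : LoewnerBounded (s + t) (X + Y) := by
  constructor
  · convert hX.1.add hY.1 using 1; module
  · convert hX.2.add hY.2 using 1; module

theorem kronecker [Fintype n] [Fintype m] [DecidableEq m] {s t : ℝ} {A : Matrix n n 𝕜}
    {B : Matrix m m 𝕜} (hA : LoewnerBounded s A) (hB : LoewnerBounded t B) :
    LoewnerBounded (s * t) (A ⊗ₖ B) := by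
  -- `2 (s t ∓ A ⊗ B) = (s - A) ⊗ (t ± B) + (s + A) ⊗ (t ∓ B)`
  have half : (0 : ℝ) ≤ 1 / 2 := by norm_num
  constructor
  · convert ((hA.1.kronecker hB.2).add (hA.2.kronecker hB.1)).smul half using 1
    simp only [sub_kronecker, kronecker_sub, add_kronecker, kronecker_add, smul_kronecker,
      kronecker_smul, one_kronecker_one]
    module
  · convert ((hA.1.kronecker hB.1).add (hA.2.kronecker hB.2)).smul half using 1
    simp only [sub_kronecker, kronecker_sub, add_kronecker, kronecker_add, smul_kronecker,
      kronecker_smul, one_kronecker_one]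
    module

theorem abs_re_trace_mul_le [Fintype n] {s : ℝ} {X M : Matrix n n 𝕜} (hX : LoewnerBounded s X)
    (hM : M.PosSemidef) : |RCLike.re (X * M).trace| ≤ s * RCLike.re M.trace := by
  have h₁ := hX.1.re_trace_mul_nonneg hM
  have h₂ := hX.2.re_trace_mul_nonneg hM
  simp only [sub_mul, add_mul, smul_mul, one_mul, trace_sub, trace_add, trace_smul, map_sub,
    map_add, RCLike.smul_re] at h₁ h₂
  exact abs_le.2 ⟨by linarith, by linarith⟩

end LoewnerBounded

theorem loewnerBounded_of_mul_self [Fintype n] {β : ℝ} (hβ : 0 ≤ β) {b : Matrix n n 𝕜}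
    (hb : b.IsHermitian) (hsq : b * b = β ^ 2 • 1) : LoewnerBounded β b := by
  rcases hβ.eq_or_lt with rfl | hβ
  · have : b = 0 := conjTranspose_mul_self_eq_zero.1 (by rw [hb.eq, hsq]; simp)
    simp [LoewnerBounded, this, PosSemidef.zero]
  -- both `P = β ∓ b` satisfy `Pᴴ P = P ^ 2 = 2 β P`
  have of_sq : ∀ P : Matrix n n 𝕜, P.IsHermitian → Pᴴ * P = (2 * β) • P → P.PosSemidef := by
    intro P hP h
    have := (posSemidef_conjTranspose_mul_self P).smul (inv_nonneg.2 (by positivity : 0 ≤ 2 * β))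
    rwa [h, smul_smul, inv_mul_cancel₀ (by positivity), one_smul] at this
  have hβ1 : (β • 1 : Matrix n n 𝕜).IsHermitian := by simp [IsHermitian, conjTranspose_smul]
  refine ⟨of_sq _ (hβ1.sub hb) ?_, of_sq _ (hβ1.add hb) ?_⟩
  · rw [(hβ1.sub hb).eq]
    simp only [sub_mul, mul_sub, Matrix.smul_mul, Matrix.mul_smul, one_mul, mul_one, hsq]
    module
  · rw [(hβ1.add hb).eq]
    simp only [add_mul, mul_add, Matrix.smul_mul, Matrix.mul_smul, one_mul, mul_one, hsq]
    module

section FinTwo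

variable {R : Type*} [CommRing R]

theorem mul_self_eq_neg_det_smul_one_of_trace_eq_zero {b : Matrix (Fin 2) (Fin 2) R}
    (hb : b.trace = 0) : b * b = -b.det • 1 := by
  have h11 : b 1 1 = -b 0 0 := by rw [trace_fin_two] at hb; linear_combination hb
  ext i j
  fin_cases i <;> fin_cases j <;> simp [mul_apply, Fin.sum_univ_two, det_fin_two, h11] <;> ring

theorem det_add_add_det_sub_fin_two (c d : Matrix (Fin 2) (Fin 2) R) :
    (c + d).det + (c - d).det = 2 * c.det + 2 * d.det := by
  simp only [det_fin_two, add_apply, sub_apply]; ring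

theorem IsHermitian.neg_det_nonneg_of_trace_eq_zero {b : Matrix (Fin 2) (Fin 2) 𝕜}
    (hb : b.IsHermitian) (htr : b.trace = 0) : 0 ≤ -b.det := by
  have := (posSemidef_conjTranspose_mul_self b).diag_nonneg (i := 0)
  simpa [hb.eq, mul_self_eq_neg_det_smul_one_of_trace_eq_zero htr] using this

theorem IsHermitian.loewnerBounded_sqrt_neg_det {b : Matrix (Fin 2) (Fin 2) 𝕜}
    (hb : b.IsHermitian) (htr : b.trace = 0) : LoewnerBounded √(-RCLike.re b.det) b := by
  obtain ⟨x, hx, hxdet⟩ :=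
    RCLike.nonneg_iff_exists_ofReal.1 (hb.neg_det_nonneg_of_trace_eq_zero htr)
  have hre : -RCLike.re b.det = x := by simpa using congrArg RCLike.re hxdet.symm
  refine loewnerBounded_of_mul_self (Real.sqrt_nonneg _) hb ?_
  rw [hre, Real.sq_sqrt hx, mul_self_eq_neg_det_smul_one_of_trace_eq_zero htr, ← hxdet]
  exact (RCLike.real_smul_eq_coe_smul (K := 𝕜) x (1 : Matrix (Fin 2) (Fin 2) 𝕜)).symm

end FinTwo

end Matrix

theorem Real.sqrt_add_sqrt_le_sqrt_two {x y : ℝ} (hx : 0 ≤ x) (hy : 0 ≤ y) (h : x + y ≤ 1) :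
    √x + √y ≤ √2 := by
  rw [Real.le_sqrt (by positivity) zero_le_two]
  nlinarith [Real.sq_sqrt hx, Real.sq_sqrt hy, sq_nonneg (√x - √y)]

namespace IsState

section

variable {ρ : Matrix (Fin 2) (Fin 2) ℂ} (hρ : IsState ρ)
include hρ

theorem trace_sub_half : (ρ - (2 : ℂ)⁻¹ • 1).trace = 0 := by
  rw [trace_sub, trace_smul, trace_one, hρ.2]; norm_num

theorem isHermitian_sub_half : (ρ - (2 : ℂ)⁻¹ • 1).IsHermitian :=
  hρ.1.isHermitian.sub (by simp [IsHermitian, conjTranspose_smul])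

theorem neg_re_det_sub_half_le : -(ρ - (2 : ℂ)⁻¹ • 1).det.re ≤ 1 / 4 := by
  have hdet : (ρ - (2 : ℂ)⁻¹ • 1).det = ρ.det - 1 / 4 := by
    have htr := hρ.2
    rw [trace_fin_two] at htr
    simp only [det_fin_two, Matrix.sub_apply, Matrix.smul_apply, one_apply_eq, one_apply_ne,
      ne_eq, zero_ne_one, one_ne_zero, not_false_eq_true, smul_eq_mul, mul_one, mul_zero,
      sub_zero]
    linear_combination (-1 / 2 : ℂ) * htr
  have := (Complex.le_def.1 hρ.1.det_nonneg).1
  rw [hdet, Complex.sub_re]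
  norm_num at this ⊢
  linarith

theorem loewnerBounded_sub_half : LoewnerBounded (1 / 2) (ρ - (2 : ℂ)⁻¹ • 1) := by
  refine (hρ.isHermitian_sub_half.loewnerBounded_sqrt_neg_det hρ.trace_sub_half).mono ?_
  rw [RCLike.re_to_complex, Real.sqrt_le_left (by norm_num)]
  linarith [hρ.neg_re_det_sub_half_le]

end

theorem exists_loewnerBounded_add_sub {ρ₀ ρ₁ : Matrix (Fin 2) (Fin 2) ℂ} (h₀ : IsState ρ₀)
    (h₁ : IsState ρ₁) :
    ∃ γ δ : ℝ, γ + δ ≤ √2 ∧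
      LoewnerBounded γ ((ρ₀ - (2 : ℂ)⁻¹ • 1) + (ρ₁ - (2 : ℂ)⁻¹ • 1)) ∧
      LoewnerBounded δ ((ρ₀ - (2 : ℂ)⁻¹ • 1) - (ρ₁ - (2 : ℂ)⁻¹ • 1)) := by
  set b₀ := ρ₀ - (2 : ℂ)⁻¹ • 1
  set b₁ := ρ₁ - (2 : ℂ)⁻¹ • 1
  have hc : (b₀ + b₁).IsHermitian ∧ (b₀ + b₁).trace = 0 :=
    ⟨h₀.isHermitian_sub_half.add h₁.isHermitian_sub_half,
      by rw [trace_add, h₀.trace_sub_half, h₁.trace_sub_half, add_zero]⟩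
  have hd : (b₀ - b₁).IsHermitian ∧ (b₀ - b₁).trace = 0 :=
    ⟨h₀.isHermitian_sub_half.sub h₁.isHermitian_sub_half,
      by rw [trace_sub, h₀.trace_sub_half, h₁.trace_sub_half, sub_zero]⟩
  refine ⟨_, _, ?_, hc.1.loewnerBounded_sqrt_neg_det hc.2, hd.1.loewnerBounded_sqrt_neg_det hd.2⟩
  have hpar := congrArg RCLike.re (det_add_add_det_sub_fin_two b₀ b₁)
  have hb₀ : -b₀.det.re ≤ 1 / 4 := h₀.neg_re_det_sub_half_le
  have hb₁ : -b₁.det.re ≤ 1 / 4 := h₁.neg_re_det_sub_half_le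
  simp only [map_add, RCLike.ofNat_mul_re, RCLike.re_to_complex] at hpar ⊢
  refine Real.sqrt_add_sqrt_le_sqrt_two ?_ ?_ (by linarith)
  · simpa using (RCLike.nonneg_iff.1 (hc.1.neg_det_nonneg_of_trace_eq_zero hc.2)).1
  · simpa using (RCLike.nonneg_iff.1 (hd.1.neg_det_nonneg_of_trace_eq_zero hd.2)).1

end IsState

theorem Ediff2_two_smul_sub_one {ρA : Matrix (Fin 2) (Fin 2) ℂ} (hA : ρA.trace = 1)
    (ρB : Matrix (Fin 2) (Fin 2) ℂ) (M₁ : Matrix (Fin 2 × Fin 2) (Fin 2 × Fin 2) ℂ) :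
    Ediff2 ρA ρB ((2 : ℂ) • M₁ - 1) =
      4 * (((ρA - (2 : ℂ)⁻¹ • 1) ⊗ₖ (ρB - (2 : ℂ)⁻¹ • 1)) * M₁).trace.re := by
  have htr : (ρA - (2 : ℂ)⁻¹ • 1).trace = 0 := by
    rw [trace_sub, trace_smul, trace_one, hA]; norm_num
  rw [Ediff2, mul_sub, mul_one, Matrix.mul_smul, trace_sub, trace_smul, trace_kronecker, htr,
    zero_mul, sub_zero, smul_eq_mul, Complex.mul_re, Complex.re_ofNat, Complex.im_ofNat, zero_mul,
    sub_zero]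
  ring

theorem dual_tsirelson_bound_general
    (M₁ : Matrix (Fin 2 × Fin 2) (Fin 2 × Fin 2) ℂ)
    (hM₁ : M₁.PosSemidef)
    (htr : M₁.trace ≤ 1)
    (ρA₀ ρA₁ ρB₀ ρB₁ : Matrix (Fin 2) (Fin 2) ℂ)
    (hA₀ : IsState ρA₀) (hA₁ : IsState ρA₁) (hB₀ : IsState ρB₀) (hB₁ : IsState ρB₁) :
    |Ediff2 ρA₀ ρB₀ ((2 : ℂ) • M₁ - 1) + Ediff2 ρA₀ ρB₁ ((2 : ℂ) • M₁ - 1)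
      + Ediff2 ρA₁ ρB₀ ((2 : ℂ) • M₁ - 1) - Ediff2 ρA₁ ρB₁ ((2 : ℂ) • M₁ - 1)|
      ≤ 2 * Real.sqrt 2 := by
  simp only [Ediff2_two_smul_sub_one hA₀.2, Ediff2_two_smul_sub_one hA₁.2]
  obtain ⟨γ, δ, hγδ, hγ, hδ⟩ := hB₀.exists_loewnerBounded_add_sub hB₁
  set b₀ := ρB₀ - (2 : ℂ)⁻¹ • 1
  set b₁ := ρB₁ - (2 : ℂ)⁻¹ • 1
  set X := (ρA₀ - (2 : ℂ)⁻¹ • 1) ⊗ₖ (b₀ + b₁) + (ρA₁ - (2 : ℂ)⁻¹ • 1) ⊗ₖ (b₀ - b₁)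
  have hX : LoewnerBounded (1 / 2 * γ + 1 / 2 * δ) X :=
    (hA₀.loewnerBounded_sub_half.kronecker hγ).add (hA₁.loewnerBounded_sub_half.kronecker hδ)
  have hτ₀ : 0 ≤ RCLike.re M₁.trace := (RCLike.nonneg_iff.1 hM₁.trace_nonneg).1
  have hτ₁ : RCLike.re M₁.trace ≤ 1 := (Complex.le_def.1 htr).1
  calc _ = 4 * |RCLike.re (X * M₁).trace| := by
        rw [← abs_of_pos (by norm_num : (0 : ℝ) < 4), ← abs_mul]
        congr 1
        simp only [X, kronecker_add, kronecker_sub, add_mul, sub_mul, trace_add, trace_sub,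
          map_add, map_sub, RCLike.re_to_complex]
        ring
    _ ≤ 4 * ((1 / 2 * γ + 1 / 2 * δ) * RCLike.re M₁.trace) := by
        gcongr; exact hX.abs_re_trace_mul_le hM₁
    _ ≤ 2 * √2 := by
        linarith [mul_le_mul_of_nonneg_right hγδ hτ₀,
          mul_le_of_le_one_right (Real.sqrt_nonneg 2) hτ₁]

/-- dual Tsirelson bound for qubits: any two-qubit effect `M₁` with
`tr M₁ ≤ 1` satisfies `|D| ≤ 2√2` for all qubit states. -/
theorem dual_tsirelson_bound
    (M₁ : Matrix (Fin 2 × Fin 2) (Fin 2 × Fin 2) ℂ)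
    (hM₁ : M₁.PosSemidef)
    (hM₁' : ((1 : Matrix (Fin 2 × Fin 2) (Fin 2 × Fin 2) ℂ) - M₁).PosSemidef)
    (htr : M₁.trace ≤ 1)
    (ρA₀ ρA₁ ρB₀ ρB₁ : Matrix (Fin 2) (Fin 2) ℂ)
    (hA₀ : IsState ρA₀) (hA₁ : IsState ρA₁) (hB₀ : IsState ρB₀) (hB₁ : IsState ρB₁) :
    |Ediff2 ρA₀ ρB₀ ((2 : ℂ) • M₁ - 1) + Ediff2 ρA₀ ρB₁ ((2 : ℂ) • M₁ - 1)
      + Ediff2 ρA₁ ρB₀ ((2 : ℂ) • M₁ - 1) - Ediff2 ρA₁ ρB₁ ((2 : ℂ) • M₁ - 1)|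
      ≤ 2 * Real.sqrt 2 :=
  dual_tsirelson_bound_general M₁ hM₁ htr ρA₀ ρA₁ ρB₀ ρB₁ hA₀ hA₁ hB₀ hB₁
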